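/- arXiv:2504.14261 — 9 statements merged into one kernel-verified Lean document; each statement's English description precedes it below -/
import Mathlib

section
/- For all integers k ≥ 2 and all n with 1 ≤ n ≤ k+1, the k-generalized Pell number satisfies P_n^{(k)} = F_{2n-1}, where F denotes the Fibonacci sequence with F_1 = F_2 = 1. -/
/-!
In the range `n ≤ k + 1` every term of the recurrence reaching below index `1` is one of the
initial zeros, so `P (n + 2) = 2 P (n + 1) + (P 1 + ⋯ + P n)`. Subtracting two consecutive
instances gives `P (n + 3) = 3 P (n + 2) - P (n + 1)`, the recurrence satisfied by the odd-indexed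
Fibonacci numbers, and the two sequences share their first two values `1, 2`.
-/

open Finset

theorem eq_of_linear_recurrence_of_le {u v : ℕ → ℤ} {a b : ℤ} {N : ℕ}
    (h0 : u 0 = v 0) (h1 : u 1 = v 1)
    (hu : ∀ n, n + 2 ≤ N → u (n + 2) = a * u (n + 1) + b * u n)
    (hv : ∀ n, n + 2 ≤ N → v (n + 2) = a * v (n + 1) + b * v n) :
    ∀ n ≤ N, u n = v n := by
  intro n hn
  induction n using Nat.strong_induction_on with
  | _ n ih =>
    match n with
    | 0 => exact h0
    | 1 => exact h1
    | n + 2 =>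
      rw [hu n hn, hv n hn, ih n (by omega) (by omega), ih (n + 1) (by omega) (by omega)]

theorem Nat.cast_fib_add_four (m : ℕ) :
    (Nat.fib (m + 4) : ℤ) = 3 * Nat.fib (m + 2) - Nat.fib m := by
  simp only [Nat.fib_add_two, Nat.cast_add]
  ring

section KPell

variable {k : ℕ} {P : ℤ → ℤ}
  (h0 : ∀ n : ℤ, 2 - (k : ℤ) ≤ n → n ≤ 0 → P n = 0)
  (hrec : ∀ n : ℤ, 2 ≤ n → P n = 2 * P (n - 1) + ∑ i ∈ Icc (2 : ℤ) (k : ℤ), P (n - i))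
include h0 hrec

-- `k - 1` is truncated: for `k = 0` the case `n = 0` is still covered, the sum being empty.
theorem kPell_add_two {n : ℕ} (hn : n ≤ k - 1) :
    P (n + 2) = 2 * P (n + 1) + ∑ m ∈ range n, P (m + 1) := by
  have htail : ∑ i ∈ Icc (2 : ℤ) k, P (n + 2 - i) = ∑ i ∈ Icc (2 : ℤ) (n + 1), P (n + 2 - i) := by
    refine (sum_subset (fun i hi => ?_) fun i hi hi' => h0 _ ?_ ?_).symm <;>
      simp only [mem_Icc] at * <;> omega
  have hreindex : ∑ i ∈ Icc (2 : ℤ) (n + 1), P (n + 2 - i) = ∑ m ∈ range n, P (m + 1) := by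
    refine sum_nbij' (fun i => (n + 1 - i).toNat) (fun m => n + 1 - m) (fun i hi => ?_)
      (fun m hm => ?_) (fun i hi => ?_) (fun m hm => ?_) fun i hi => congrArg P ?_
    all_goals simp only [mem_Icc, mem_range] at *; omega
  rw [hrec _ (by omega), ← htail.trans hreindex]
  ring_nf

theorem kPell_add_three {n : ℕ} (hn : n + 2 ≤ k) :
    P (n + 3) = 3 * P (n + 2) - P (n + 1) := by
  have h₁ := kPell_add_two h0 hrec (n := n + 1) (by omega)
  have h₂ := kPell_add_two h0 hrec (n := n) (by omega)
  rw [sum_range_succ] at h₁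
  push_cast at h₁
  linear_combination (norm := ring_nf) h₁ - h₂

end KPell

theorem kPell_eq_fib_general (k : ℕ)
    (P : ℤ → ℤ)
    (h0 : ∀ n : ℤ, 2 - (k : ℤ) ≤ n → n ≤ 0 → P n = 0) (h1 : P 1 = 1)
    (hrec : ∀ n : ℤ, 2 ≤ n →
      P n = 2 * P (n - 1) + ∑ i ∈ Finset.Icc (2 : ℤ) (k : ℤ), P (n - i)) :
    ∀ n : ℕ, 1 ≤ n → n ≤ k + 1 → P (n : ℤ) = (Nat.fib (2 * n - 1) : ℤ) := by
  intro n hn1 hnk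
  obtain ⟨m, rfl⟩ : ∃ m, n = m + 1 := ⟨n - 1, by omega⟩
  have hP2 : P 2 = 2 := by simpa [h1] using kPell_add_two h0 hrec (n := 0) (Nat.zero_le _)
  have hP : ∀ j, j + 2 ≤ k →
      P (↑(j + 2) + 1) = 3 * P (↑(j + 1) + 1) + -1 * P (↑j + 1) := fun j hj => by
    push_cast
    linear_combination (norm := ring_nf) kPell_add_three h0 hrec hj
  have hfib : ∀ j, j + 2 ≤ k → (Nat.fib (2 * (j + 2) + 1) : ℤ) =
      3 * Nat.fib (2 * (j + 1) + 1) + -1 * Nat.fib (2 * j + 1) := fun j _ => by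
    linear_combination Nat.cast_fib_add_four (2 * j + 1)
  have key := eq_of_linear_recurrence_of_le (u := fun j => P (j + 1))
    (v := fun j => (Nat.fib (2 * j + 1) : ℤ)) (by simpa using h1)
    (by norm_num [hP2, Nat.fib_add_two]) hP hfib m (by omega)
  simpa [show 2 * (m + 1) - 1 = 2 * m + 1 by omega] using key

theorem kPell_eq_fib (k : ℕ) (hk : 2 ≤ k)
    (P : ℤ → ℤ)
    (h0 : ∀ n : ℤ, 2 - (k : ℤ) ≤ n → n ≤ 0 → P n = 0) (h1 : P 1 = 1)
    (hrec : ∀ n : ℤ, 2 ≤ n →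
      P n = 2 * P (n - 1) + ∑ i ∈ Finset.Icc (2 : ℤ) (k : ℤ), P (n - i)) :
    ∀ n : ℕ, 1 ≤ n → n ≤ k + 1 → P (n : ℤ) = (Nat.fib (2 * n - 1) : ℤ) :=
  kPell_eq_fib_general k P h0 h1 hrec
end

section
/- For all integers k ≥ 2, the k-generalized Pell number at index k+2 satisfies P_{k+2}^{(k)} = F_{2k+3} - 1, where F denotes the Fibonacci sequence. -/
/-!
Telescoping two consecutive instances of the defining recurrence gives the (k+1)-term relation
`P n = 3 P (n-1) - P (n-2) - P (n-1-k)`. For `n ≤ k + 1` the last term lies among the initial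
zeros, so `P` follows the recurrence `x (n+2) = 3 x (n+1) - x n` of the odd-indexed Fibonacci
numbers and `P n = F (2n-1)` up to `n = k + 1`. At `n = k + 2` the last term is `P 1 = 1`, which
produces the `- 1`.
-/

open Finset

theorem Finset.sum_Icc_comp_sub_sub_sum_Icc_comp_sub {G : Type*} [AddCommGroup G] (f : ℤ → G)
    (n : ℤ) {k : ℤ} (hk : 1 ≤ k) :
    ∑ i ∈ Icc 2 k, f (n - i) - ∑ i ∈ Icc 2 k, f (n - 1 - i) = f (n - 2) - f (n - 1 - k) := by
  induction k, hk using Int.leInduction with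
  | base => simp [show n - 1 - 1 = n - 2 by ring]
  | succ k hk ih =>
    rw [← insert_Icc_right_eq_Icc_add_one (by omega), sum_insert (by simp), sum_insert (by simp),
      show n - 1 - k = n - (k + 1) by ring] at *
    linear_combination (norm := abel) ih

theorem Nat.fib_add_four_add_fib (n : ℕ) : fib (n + 4) + fib n = 3 * fib (n + 2) := by
  simp only [fib_add_two, show n + 4 = n + 2 + 2 by rfl, show n + 3 = n + 1 + 2 by rfl]
  ring

namespace KPell

variable {k : ℤ} {P : ℤ → ℤ}
  (hrec : ∀ n : ℤ, 2 ≤ n → P n = 2 * P (n - 1) + ∑ i ∈ Icc (2 : ℤ) k, P (n - i))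
include hrec

theorem eq_three_mul_sub (hk : 1 ≤ k) {n : ℤ} (hn : 3 ≤ n) :
    P n = 3 * P (n - 1) - P (n - 2) - P (n - 1 - k) := by
  have hn₁ := hrec n (by omega)
  have hn₂ := hrec (n - 1) (by omega)
  have := sum_Icc_comp_sub_sub_sum_Icc_comp_sub P n hk
  rw [show n - 1 - 1 = n - 2 by ring] at hn₂
  linear_combination hn₁ - hn₂ + this

theorem two_eq (h0 : ∀ n : ℤ, 2 - k ≤ n → n ≤ 0 → P n = 0) (h1 : P 1 = 1) : P 2 = 2 := by
  rw [hrec 2 le_rfl, sum_eq_zero fun i hi => h0 _ (by simp at hi; omega) (by simp at hi; omega)]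
  simp [h1]

theorem add_three_eq (hk : 1 ≤ k) {m : ℕ} (hm₁ : P (m + 1) = Nat.fib (2 * m + 1))
    (hm₂ : P (m + 2) = Nat.fib (2 * m + 3)) :
    P (m + 3) = Nat.fib (2 * m + 5) - P (m + 2 - k) := by
  rw [eq_three_mul_sub hrec hk (by omega), show (m : ℤ) + 3 - 1 = m + 2 by ring,
    show (m : ℤ) + 3 - 2 = m + 1 by ring, hm₁, hm₂]
  have := Nat.fib_add_four_add_fib (2 * m + 1)
  zify at this
  linear_combination -this

theorem eq_fib_of_lt (hk : 1 ≤ k) (h0 : ∀ n : ℤ, 2 - k ≤ n → n ≤ 0 → P n = 0) (h1 : P 1 = 1)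
    {m : ℕ} (hm : (m : ℤ) < k) :
    P (m + 1) = Nat.fib (2 * m + 1) ∧ P (m + 2) = Nat.fib (2 * m + 3) := by
  induction m with
  | zero => simpa [h1, show Nat.fib 3 = 2 from rfl] using two_eq hrec h0 h1
  | succ m ih =>
    obtain ⟨hm₁, hm₂⟩ := ih (by omega)
    have hm₃ := add_three_eq hrec hk hm₁ hm₂
    rw [h0 (m + 2 - k) (by omega) (by omega), sub_zero] at hm₃
    push_cast
    ring_nf at hm₂ hm₃ ⊢
    exact ⟨hm₂, hm₃⟩

end KPell

theorem kPell_kplus2_eq_fib_sub_one (k : ℕ) (hk : 2 ≤ k)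
    (P : ℤ → ℤ)
    (h0 : ∀ n : ℤ, 2 - (k : ℤ) ≤ n → n ≤ 0 → P n = 0) (h1 : P 1 = 1)
    (hrec : ∀ n : ℤ, 2 ≤ n →
      P n = 2 * P (n - 1) + ∑ i ∈ Finset.Icc (2 : ℤ) (k : ℤ), P (n - i)) :
    P ((k : ℤ) + 2) = (Nat.fib (2 * k + 3) : ℤ) - 1 := by
  obtain ⟨j, rfl⟩ : ∃ j, k = j + 1 := ⟨k - 1, by omega⟩
  have hk' : (1 : ℤ) ≤ (j + 1 : ℕ) := by omega
  obtain ⟨hj₁, hj₂⟩ := KPell.eq_fib_of_lt hrec hk' h0 h1 (m := j) (by omega)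
  have := KPell.add_three_eq hrec hk' hj₁ hj₂
  rw [show (j : ℤ) + 2 - (j + 1 : ℕ) = 1 by push_cast; ring, h1] at this
  push_cast
  ring_nf at this ⊢
  exact this
end

section
/- For every integer k ≥ 2, the polynomial Ψ_k(x) = x^k - 2x^{k-1} - x^{k-2} - ... - x - 1 has exactly one real root α with α > 1, and this root satisfies φ²(1 - φ^{-k}) < α < φ², where φ = (1+√5)/2. -/
/-!
Dividing by `x^k` gives `Ψ_k(x) / x^k = 1 - 2/x - 1/x^2 - ⋯ - 1/x^k`, which is strictly increasing
on `(0, ∞)`, so `Ψ_k` has at most one positive root. Since `x^2 - 3x + 1 = (x - φ^2)(x - ψ^2)`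
with `ψ^2 = 3 - φ^2`, the identity `(x - 1) Ψ_k(x) = x^(k-1) (x^2 - 3x + 1) + 1` gives
`Ψ_k(φ^2) = 1/φ > 0`, while at `L = φ^2 (1 - φ^(-k))` the factor `L - φ^2 = -φ^(2-k)` is just
large enough (using `L ≥ φ`) to make the first term at most `-2`, so `Ψ_k(L) < 0`.
The intermediate value theorem finishes.
-/

open Finset Set Real goldenRatio

noncomputable def pellCharPoly (k : ℕ) (x : ℝ) : ℝ :=
  x ^ k - 2 * x ^ (k - 1) - ∑ i ∈ range (k - 1), x ^ i

theorem pellCharPoly_succ (n : ℕ) (x : ℝ) :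
    pellCharPoly (n + 1) x = x ^ (n + 1) - 2 * x ^ n - ∑ i ∈ range n, x ^ i :=
  rfl

theorem continuous_pellCharPoly (k : ℕ) : Continuous (pellCharPoly k) := by
  unfold pellCharPoly
  fun_prop

theorem pellCharPoly_succ_succ (n : ℕ) (x : ℝ) :
    pellCharPoly (n + 2) x = x * pellCharPoly (n + 1) x - 1 := by
  rw [pellCharPoly_succ, pellCharPoly_succ, sum_range_succ', mul_sub, mul_sum]
  simp only [pow_succ']
  ring

theorem sub_one_mul_pellCharPoly (n : ℕ) (x : ℝ) :
    (x - 1) * pellCharPoly (n + 1) x = x ^ n * (x ^ 2 - 3 * x + 1) + 1 := by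
  rw [pellCharPoly_succ]
  linear_combination -geom_sum_mul x n

theorem strictMonoOn_pellCharPoly_div_pow (n : ℕ) :
    StrictMonoOn (fun x => pellCharPoly (n + 1) x / x ^ (n + 1)) (Ioi 0) := by
  induction n with
  | zero =>
    intro a (ha : 0 < a) b (hb : 0 < b) hab
    simp only [pellCharPoly_succ, zero_add, pow_one, pow_zero, range_zero, sum_empty, sub_zero,
      sub_div, div_self ha.ne', div_self hb.ne']
    gcongr
  | succ n ih =>
    have hdiv : ∀ x ∈ Ioi (0 : ℝ), pellCharPoly (n + 2) x / x ^ (n + 2)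
        = pellCharPoly (n + 1) x / x ^ (n + 1) + -(x ^ (n + 2))⁻¹ := by
      intro x (hx : 0 < x)
      rw [pellCharPoly_succ_succ]
      field_simp
      ring
    refine (ih.add_monotone fun a (ha : 0 < a) b _ hab => ?_).congr fun x hx => (hdiv x hx).symm
    gcongr

theorem eq_of_pellCharPoly_eq_zero (n : ℕ) {α β : ℝ} (hα : 0 < α) (hβ : 0 < β)
    (hαroot : pellCharPoly (n + 1) α = 0) (hβroot : pellCharPoly (n + 1) β = 0) : α = β :=
  (strictMonoOn_pellCharPoly_div_pow n).injOn hα hβ (by simp [hαroot, hβroot])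

theorem sq_sub_three_mul_add_one_eq (x : ℝ) :
    x ^ 2 - 3 * x + 1 = (x - φ ^ 2) * (x - (3 - φ ^ 2)) := by
  linear_combination (φ ^ 2 + φ - 1) * goldenRatio_sq

theorem pellCharPoly_goldenRatio_sq (n : ℕ) : pellCharPoly (n + 1) (φ ^ 2) = φ⁻¹ := by
  have h := sub_one_mul_pellCharPoly n (φ ^ 2)
  rw [sq_sub_three_mul_add_one_eq, sub_self, zero_mul, mul_zero, zero_add,
    show φ ^ 2 - 1 = φ by linear_combination goldenRatio_sq] at h
  exact eq_inv_of_mul_eq_one_right h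

theorem goldenRatio_le_sq_mul_one_sub_inv_pow (n : ℕ) : φ ≤ φ ^ 2 * (1 - (φ ^ (n + 2))⁻¹) := by
  have h : φ ^ 2 * (φ ^ (n + 2))⁻¹ ≤ 1 := by
    rw [← div_eq_mul_inv, div_le_one (by positivity)]
    exact pow_le_pow_right₀ one_lt_goldenRatio.le (by omega)
  linarith [goldenRatio_sq]

theorem sq_mul_one_sub_inv_pow_lt_goldenRatio_sq (n : ℕ) :
    φ ^ 2 * (1 - (φ ^ (n + 2))⁻¹) < φ ^ 2 := by
  have : 0 < φ ^ 2 * (φ ^ (n + 2))⁻¹ := by positivity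
  linarith

theorem pellCharPoly_sq_mul_one_sub_inv_pow_neg (n : ℕ) :
    pellCharPoly (n + 2) (φ ^ 2 * (1 - (φ ^ (n + 2))⁻¹)) < 0 := by
  set L := φ ^ 2 * (1 - (φ ^ (n + 2))⁻¹)
  have hφL : φ ≤ L := goldenRatio_le_sq_mul_one_sub_inv_pow n
  have hL1 : 0 < L - 1 := by linarith [one_lt_goldenRatio]
  have hfirst : 2 ≤ L ^ (n + 1) * (φ ^ 2 * (φ ^ (n + 2))⁻¹) * (L - (3 - φ ^ 2)) := by
    have hφ : φ ^ (n + 1) * (φ ^ 2 * (φ ^ (n + 2))⁻¹) = φ := by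
      field_simp
      ring
    have hgap : 0 ≤ φ - (3 - φ ^ 2) := by linarith [goldenRatio_sq, one_lt_goldenRatio]
    calc (2 : ℝ) = φ ^ (n + 1) * (φ ^ 2 * (φ ^ (n + 2))⁻¹) * (φ - (3 - φ ^ 2)) := by
          rw [hφ]; linear_combination -(φ + 2) * goldenRatio_sq
      _ ≤ L ^ (n + 1) * (φ ^ 2 * (φ ^ (n + 2))⁻¹) * (L - (3 - φ ^ 2)) := by
          gcongr
          exact mul_nonneg (pow_nonneg (by linarith) _) (by positivity)
  have h := sub_one_mul_pellCharPoly (n + 1) L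
  rw [sq_sub_three_mul_add_one_eq, show L - φ ^ 2 = -(φ ^ 2 * (φ ^ (n + 2))⁻¹) by ring] at h
  have : (L - 1) * pellCharPoly (n + 2) L < 0 := by linarith
  exact neg_of_mul_neg_right this hL1.le

theorem psi_k_unique_root_bounds (k : ℕ) (hk : 2 ≤ k) :
    ∃ α : ℝ,
      (1 < α ∧ α ^ k - 2 * α ^ (k - 1) - ∑ i ∈ Finset.range (k - 1), α ^ i = 0) ∧
      (∀ β : ℝ, 1 < β → β ^ k - 2 * β ^ (k - 1) - ∑ i ∈ Finset.range (k - 1), β ^ i = 0 → β = α) ∧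
      ((1 + Real.sqrt 5) / 2) ^ 2 * (1 - ((1 + Real.sqrt 5) / 2) ^ (-(k : ℤ))) < α ∧
      α < ((1 + Real.sqrt 5) / 2) ^ 2 := by
  obtain ⟨n, rfl⟩ := Nat.exists_eq_add_of_le' hk
  rw [zpow_neg, zpow_natCast]
  have hneg := pellCharPoly_sq_mul_one_sub_inv_pow_neg n
  have hpos : 0 < pellCharPoly (n + 2) (φ ^ 2) := by
    rw [pellCharPoly_goldenRatio_sq]
    exact inv_pos.mpr goldenRatio_pos
  obtain ⟨α, ⟨hLα, hαU⟩, hα⟩ := intermediate_value_Ioo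
    (sq_mul_one_sub_inv_pow_lt_goldenRatio_sq n).le
    (continuous_pellCharPoly (n + 2)).continuousOn ⟨hneg, hpos⟩
  have hα1 : 1 < α :=
    one_lt_goldenRatio.trans_le (goldenRatio_le_sq_mul_one_sub_inv_pow n) |>.trans hLα
  exact ⟨α, ⟨hα1, hα⟩, fun β hβ hβroot =>
    eq_of_pellCharPoly_eq_zero (n + 1) (by linarith) (by linarith) hβroot hα, hLα, hαU⟩
end

section
/- Let k ≥ 2 and let α be the unique real root greater than 1 of Ψ_k(x) = x^k - 2x^{k-1} - x^{k-2} - ... - x - 1. Then for all n ≥ 1, α^{n-2} ≤ P_n^{(k)} ≤ α^{n-1}. -/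
/-!
The recurrence has nonnegative coefficients, so a subsolution lying below a supersolution on the
initial window `[2 - k, 1]` stays below it forever. The upper bound compares `P` with the exact
solution `α ^ (n - 1)`. For the lower bound `α ^ (n - 2)` cannot be used directly, since `P`
vanishes on the window; instead we use the barrier which is `0` at indices `≤ 0` and
`α ^ (n - 2) + (1 - α⁻¹)` afterwards, so that it agrees with `P` on the window. Against the exact
solution `α ^ (n - 2)` it loses only terms at nonpositive indices, and these are part of the series
`∑_{i=2}^k α ^ (-i) = 1 - 2 α⁻¹`, which the extra constant `1 - α⁻¹` absorbs.
-/

open Finset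

noncomputable def kPellStep (k : ℕ) (u : ℤ → ℝ) (n : ℤ) : ℝ :=
  2 * u (n - 1) + ∑ i ∈ Icc (2 : ℤ) k, u (n - i)

noncomputable def kPellLowerBarrier (α : ℝ) (n : ℤ) : ℝ :=
  if n ≤ 0 then 0 else α ^ (n - 2) + (1 - α⁻¹)

section

variable {k : ℕ} {α : ℝ}

theorem le_of_le_kPellStep_of_kPellStep_le {u v : ℤ → ℝ} (hk : 1 ≤ k)
    (hinit : ∀ n : ℤ, 2 - (k : ℤ) ≤ n → n ≤ 1 → u n ≤ v n)
    (hu : ∀ n : ℤ, 2 ≤ n → u n ≤ kPellStep k u n)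
    (hv : ∀ n : ℤ, 2 ≤ n → kPellStep k v n ≤ v n) :
    ∀ n : ℤ, 2 - (k : ℤ) ≤ n → u n ≤ v n := by
  intro n
  induction n using Int.strongRec (m := 2) with
  | lt n hn => exact fun hkn => hinit n hkn (by omega)
  | ge n hn ih =>
    intro _
    have hstep : kPellStep k u n ≤ kPellStep k v n := by
      unfold kPellStep
      gcongr with i hi
      · exact ih _ (by omega) (by omega)
      · rw [mem_Icc] at hi
        exact ih _ (by omega) (by omega)
    exact (hu n hn).trans (hstep.trans (hv n hn))

lemma sum_Icc_zpow_sub_eq_sum_range :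
    ∑ i ∈ Icc (2 : ℤ) k, α ^ ((k : ℤ) - i) = ∑ j ∈ range (k - 1), α ^ j := by
  refine sum_nbij' (fun i => ((k : ℤ) - i).toNat) (fun j => (k : ℤ) - j) ?_ ?_ ?_ ?_ ?_ <;>
    intro i hi <;> simp only [mem_Icc, mem_range] at hi ⊢
  · omega
  · omega
  · omega
  · omega
  · rw [← zpow_natCast, Int.toNat_of_nonneg (by omega)]

lemma kPellStep_zpow_sub (hk : 1 ≤ k) (hα : α ≠ 0)
    (hroot : α ^ k - 2 * α ^ (k - 1) - ∑ i ∈ range (k - 1), α ^ i = 0) (s n : ℤ) :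
    kPellStep k (fun j => α ^ (j - s)) n = α ^ (n - s) := by
  have hchar : α ^ (k : ℤ) = 2 * α ^ ((k : ℤ) - 1) + ∑ i ∈ Icc (2 : ℤ) k, α ^ ((k : ℤ) - i) := by
    rw [sum_Icc_zpow_sub_eq_sum_range, zpow_natCast,
      show (k : ℤ) - 1 = ((k - 1 : ℕ) : ℤ) by omega, zpow_natCast]
    linarith
  calc kPellStep k (fun j => α ^ (j - s)) n
      = α ^ (n - s - k) * (2 * α ^ ((k : ℤ) - 1) + ∑ i ∈ Icc (2 : ℤ) k, α ^ ((k : ℤ) - i)) := by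
        rw [kPellStep, mul_add, mul_sum, mul_left_comm, ← zpow_add₀ hα]
        congr 1
        · ring_nf
        · refine sum_congr rfl fun i _ => ?_
          rw [← zpow_add₀ hα]
          ring_nf
    _ = α ^ (n - s) := by
        rw [← hchar, ← zpow_add₀ hα]
        ring_nf

lemma sum_Icc_ite_zpow_le_sum_Icc_zpow_neg (hα : 0 < α) {n : ℤ} (hn : 2 ≤ n) :
    ∑ i ∈ Icc (2 : ℤ) k, (if n - i ≤ 0 then α ^ (n - i - 2) else 0) ≤
      ∑ i ∈ Icc (2 : ℤ) k, α ^ (-i) := by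
  have hfilter : (Icc (2 : ℤ) k).filter (fun i => n - i ≤ 0) =
      (Icc 2 (k - (n - 2))).image (· + (n - 2)) := by
    rw [image_add_right_Icc]
    ext i
    simp only [mem_filter, mem_Icc]
    omega
  rw [← sum_filter, hfilter, sum_image fun _ _ _ _ h => add_right_cancel h]
  calc ∑ i ∈ Icc (2 : ℤ) (k - (n - 2)), α ^ (n - (i + (n - 2)) - 2)
      = ∑ i ∈ Icc (2 : ℤ) (k - (n - 2)), α ^ (-i) := sum_congr rfl fun i _ => by ring_nf
    _ ≤ ∑ i ∈ Icc (2 : ℤ) k, α ^ (-i) :=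
        sum_le_sum_of_subset_of_nonneg (Icc_subset_Icc le_rfl (by omega))
          fun i _ _ => (zpow_pos hα _).le

lemma zpow_sub_two_le_kPellLowerBarrier (hα : 1 ≤ α) {n : ℤ} (hn : 1 ≤ n) :
    α ^ (n - 2) ≤ kPellLowerBarrier α n := by
  rw [kPellLowerBarrier, if_neg (by omega)]
  have : α⁻¹ ≤ 1 := inv_le_one_of_one_le₀ hα
  linarith

lemma kPellLowerBarrier_le_kPellStep (hk : 1 ≤ k) (hα : 1 ≤ α)
    (hroot : α ^ k - 2 * α ^ (k - 1) - ∑ i ∈ range (k - 1), α ^ i = 0) {n : ℤ} (hn : 2 ≤ n) :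
    kPellLowerBarrier α n ≤ kPellStep k (kPellLowerBarrier α) n := by
  have hα0 : 0 < α := by linarith
  have hexact := kPellStep_zpow_sub hk hα0.ne' hroot
  have htail : ∑ i ∈ Icc (2 : ℤ) k, α ^ (-i) = 1 - 2 * α⁻¹ := by
    have := hexact 0 0
    simp only [kPellStep, sub_zero, zero_sub, zpow_zero, zpow_neg_one] at this
    linarith
  have hterm : ∀ j : ℤ,
      α ^ (j - 2) - (if j ≤ 0 then α ^ (j - 2) else 0) ≤ kPellLowerBarrier α j := by
    intro j
    have : α⁻¹ ≤ 1 := inv_le_one_of_one_le₀ hα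
    unfold kPellLowerBarrier
    split_ifs <;> linarith
  have hsum := sum_le_sum fun i (_ : i ∈ Icc (2 : ℤ) k) => hterm (n - i)
  rw [sum_sub_distrib] at hsum
  have hdeficit := sum_Icc_ite_zpow_le_sum_Icc_zpow_neg (k := k) hα0 hn
  have hbarrier : ∀ j : ℤ, 1 ≤ j → kPellLowerBarrier α j = α ^ (j - 2) + (1 - α⁻¹) :=
    fun j hj => if_neg (by omega)
  have hsolution := hexact 2 n
  rw [kPellStep] at hsolution ⊢
  rw [hbarrier n (by omega), hbarrier (n - 1) (by omega)]
  have : 0 ≤ α⁻¹ := inv_nonneg.2 hα0.le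
  linarith

end

theorem kPell_dominant_root_bounds (k : ℕ) (hk : 2 ≤ k)
    (α : ℝ) (hα1 : 1 < α)
    (hαroot : α ^ k - 2 * α ^ (k - 1) - ∑ i ∈ Finset.range (k - 1), α ^ i = 0)
    (P : ℤ → ℤ)
    (h0 : ∀ n : ℤ, 2 - (k : ℤ) ≤ n → n ≤ 0 → P n = 0) (h1 : P 1 = 1)
    (hrec : ∀ n : ℤ, 2 ≤ n →
      P n = 2 * P (n - 1) + ∑ i ∈ Finset.Icc (2 : ℤ) (k : ℤ), P (n - i)) :
    ∀ n : ℤ, 1 ≤ n → α ^ (n - 2) ≤ (P n : ℝ) ∧ (P n : ℝ) ≤ α ^ (n - 1) := by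
  have hk1 : 1 ≤ k := by omega
  have hα0 : 0 < α := by linarith
  have hPstep : ∀ n : ℤ, 2 ≤ n → kPellStep k (fun j => (P j : ℝ)) n = P n := fun n hn => by
    simp [kPellStep, hrec n hn]
  have hwindow : ∀ n : ℤ, 2 - (k : ℤ) ≤ n → n ≤ 1 → (P n : ℝ) = if n ≤ 0 then 0 else 1 := by
    intro n hkn hn1
    split_ifs with hn0
    · simp [h0 n hkn hn0]
    · simp [show n = 1 by omega, h1]
  intro n hn
  constructor
  · refine (zpow_sub_two_le_kPellLowerBarrier hα1.le hn).trans ?_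
    refine le_of_le_kPellStep_of_kPellStep_le hk1 (fun m hkm hm1 => ?_)
      (fun m hm => kPellLowerBarrier_le_kPellStep hk1 hα1.le hαroot hm)
      (fun m hm => (hPstep m hm).le) n (by omega)
    rw [hwindow m hkm hm1, kPellLowerBarrier]
    split_ifs
    · rfl
    · simp [show m = 1 by omega]
  · refine le_of_le_kPellStep_of_kPellStep_le hk1 (fun m hkm hm1 => ?_)
      (fun m hm => (hPstep m hm).ge) (fun m _ => (kPellStep_zpow_sub hk1 hα0.ne' hαroot 1 m).le)
      n (by omega)
    rw [hwindow m hkm hm1]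
    split_ifs
    · exact (zpow_pos hα0 _).le
    · simp [show m = 1 by omega]
end

section
/- Let k ≥ 2, let α be the dominant root of x^k - 2x^{k-1} - ... - x - 1, and suppose n ≥ 7 is such that P_n^{(k)} equals the palindromic concatenation of ℓ copies of a digit d₁, m copies of a digit d₂ ≠ d₁, and ℓ copies of d₁, with d₁ ≥ 1 and ℓ, m ≥ 1. Then 2ℓ + m < n. -/
/-!
Both sides are compared with powers: the palindrome has `2ℓ + m` digits and a nonzero leading digit,
so `P n ≥ 10 ^ (2ℓ + m - 1)`, while the recurrence rewritten as
`P x = 3 P (x - 1) - P (x - 2) - P (x - k - 1)` together with `P ≥ 0` gives `P n ≤ 3 ^ (n - 1)`.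
Since `3 ^ j < 10 ^ j` for `j ≥ 1`, this forces `2ℓ + m < n`.
-/

open Finset

theorem Finset.sum_Icc_add_eq_add_sum_Icc_add_one {M : Type*} [AddCommMonoid M] (g : ℤ → M)
    {a b : ℤ} (hab : a ≤ b + 1) :
    ∑ i ∈ Icc a b, g i + g (b + 1) = g a + ∑ i ∈ Icc a b, g (i + 1) := by
  have hshift : ∑ i ∈ Icc a b, g (i + 1) = ∑ i ∈ Icc (a + 1) (b + 1), g i := by
    rw [← map_add_right_Icc, sum_map]
    rfl
  rw [hshift, add_comm, ← sum_insert (by simp), insert_Icc_right_eq_Icc_add_one hab,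
    ← insert_Icc_add_one_left_eq_Icc (by omega), sum_insert (by simp)]

theorem nine_mul_ten_pow_le_palindrome {d₁ d₂ ℓ : ℕ} (m : ℕ) (hd₁ : 1 ≤ d₁) (hℓ : 1 ≤ ℓ) :
    9 * 10 ^ (2 * ℓ + m - 1) ≤ (d₁ : ℤ) * 10 ^ (2 * ℓ + m)
      - ((d₁ : ℤ) - d₂) * 10 ^ (ℓ + m) + ((d₁ : ℤ) - d₂) * 10 ^ ℓ - d₁ := by
  obtain ⟨l, rfl⟩ : ∃ l, ℓ = l + 1 := ⟨ℓ - 1, by omega⟩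
  have hC : (1 : ℤ) ≤ 10 ^ l := one_le_pow₀ (by norm_num)
  have hB : (1 : ℤ) ≤ 10 ^ m := one_le_pow₀ (by norm_num)
  rw [show 2 * (l + 1) + m - 1 = 2 * l + m + 1 by omega]
  set C : ℤ := 10 ^ l
  set B : ℤ := 10 ^ m
  have hpow₁ : (10 : ℤ) ^ (2 * l + m + 1) = 10 * C ^ 2 * B := by ring
  have hpow₂ : (10 : ℤ) ^ (2 * (l + 1) + m) = 100 * C ^ 2 * B := by ring
  have hpow₃ : (10 : ℤ) ^ (l + 1 + m) = 10 * C * B := by ring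
  have hpow₄ : (10 : ℤ) ^ (l + 1) = 10 * C := by ring
  have hfactor : (d₁ : ℤ) * (100 * C ^ 2 * B) - ((d₁ : ℤ) - d₂) * (10 * C * B)
      + ((d₁ : ℤ) - d₂) * (10 * C) - d₁ = d₁ * ((10 * C - 1) * (10 * C * B + 1))
      + 10 * d₂ * C * (B - 1) := by ring
  rw [hpow₁, hpow₂, hpow₃, hpow₄, hfactor]
  have hleading : 9 * (10 * C ^ 2 * B) ≤ (10 * C - 1) * (10 * C * B + 1) := by
    nlinarith [mul_nonneg (mul_nonneg (by linarith : (0 : ℤ) ≤ C) (by linarith : (0 : ℤ) ≤ B))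
      (sub_nonneg.2 hC)]
  have hdigit₁ := le_mul_of_one_le_left
    (mul_nonneg (by linarith) (by positivity) : (0 : ℤ) ≤ (10 * C - 1) * (10 * C * B + 1))
    (show (1 : ℤ) ≤ d₁ by exact_mod_cast hd₁)
  have hdigit₂ : 0 ≤ 10 * (d₂ : ℤ) * C * (B - 1) := mul_nonneg (by positivity) (sub_nonneg.2 hB)
  linarith

structure IsKPell (k : ℕ) (P : ℤ → ℤ) : Prop where
  initial : ∀ n : ℤ, 2 - (k : ℤ) ≤ n → n ≤ 0 → P n = 0
  one : P 1 = 1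
  recurrence : ∀ n : ℤ, 2 ≤ n → P n = 2 * P (n - 1) + ∑ i ∈ Icc (2 : ℤ) (k : ℤ), P (n - i)

namespace IsKPell

variable {k : ℕ} {P : ℤ → ℤ}

theorem nonneg (hP : IsKPell k P) (hk : 1 ≤ k) {x : ℤ} (hx : 2 - (k : ℤ) ≤ x) : 0 ≤ P x := by
  suffices ∀ j : ℕ, ∀ x : ℤ, 2 - (k : ℤ) ≤ x → x ≤ j → 0 ≤ P x from
    this x.toNat x hx (Int.self_le_toNat x)
  intro j
  induction j with
  | zero => intro x hx₁ hx₂; rw [hP.initial x hx₁ (by exact_mod_cast hx₂)]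
  | succ j ih =>
    intro x hx₁ hx₂
    by_cases hxj : x ≤ j
    · exact ih x hx₁ hxj
    rcases eq_or_lt_of_le (show 1 ≤ x by omega) with rfl | hx₂'
    · rw [hP.one]; norm_num
    rw [hP.recurrence x hx₂']
    have hprev : 0 ≤ P (x - 1) := ih _ (by omega) (by omega)
    have hwindow : 0 ≤ ∑ i ∈ Icc (2 : ℤ) k, P (x - i) :=
      sum_nonneg fun i hi => by rw [mem_Icc] at hi; exact ih _ (by omega) (by omega)
    linarith

theorem eq_three_mul_sub (hP : IsKPell k P) (hk : 1 ≤ k) {x : ℤ} (hx : 3 ≤ x) :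
    P x = 3 * P (x - 1) - P (x - 2) - P (x - (k + 1)) := by
  have hwindow := sum_Icc_add_eq_add_sum_Icc_add_one (fun i => P (x - i))
    (show (2 : ℤ) ≤ k + 1 by omega)
  simp only [show ∀ i : ℤ, x - (i + 1) = x - 1 - i from fun i => by ring] at hwindow
  rw [show x - ((k : ℤ) + 1) = x - 1 - k by ring]
  have hcur := hP.recurrence x (by omega)
  have hprev := hP.recurrence (x - 1) (by omega)
  rw [show x - 1 - 1 = x - 2 by ring] at hprev
  linarith

theorem le_three_mul (hP : IsKPell k P) (hk : 1 ≤ k) {x : ℤ} (hx : 2 ≤ x) :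
    P x ≤ 3 * P (x - 1) := by
  rcases eq_or_lt_of_le hx with rfl | hx₃
  · have hwindow : ∑ i ∈ Icc (2 : ℤ) k, P (2 - i) = 0 :=
      sum_eq_zero fun i hi => by rw [mem_Icc] at hi; exact hP.initial _ (by omega) (by omega)
    rw [hP.recurrence 2 le_rfl, hwindow, show (2 : ℤ) - 1 = 1 by norm_num, hP.one]
    norm_num
  rw [hP.eq_three_mul_sub hk hx₃]
  linarith [hP.nonneg hk (show 2 - (k : ℤ) ≤ x - 2 by omega),
    hP.nonneg hk (show 2 - (k : ℤ) ≤ x - (k + 1) by omega)]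

theorem le_three_pow (hP : IsKPell k P) (hk : 1 ≤ k) (n : ℕ) : P (n + 1) ≤ 3 ^ n := by
  induction n with
  | zero => simp [hP.one]
  | succ n ih =>
    have h := hP.le_three_mul hk (show (2 : ℤ) ≤ (n + 1 : ℕ) + 1 by omega)
    push_cast at h ⊢
    rw [show (n : ℤ) + 1 + 1 - 1 = n + 1 by ring] at h
    rw [pow_succ]
    linarith

end IsKPell

theorem palindromic_kPell_digit_count_lt_general (k : ℕ) (hk : 2 ≤ k)
    (P : ℤ → ℤ)
    (h0 : ∀ n : ℤ, 2 - (k : ℤ) ≤ n → n ≤ 0 → P n = 0) (h1 : P 1 = 1)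
    (hrec : ∀ n : ℤ, 2 ≤ n →
      P n = 2 * P (n - 1) + ∑ i ∈ Finset.Icc (2 : ℤ) (k : ℤ), P (n - i))
    (n : ℕ)
    (d₁ d₂ ℓ m : ℕ) (hd₁ : 1 ≤ d₁)
    (hℓ : 1 ≤ ℓ)
    (heq : 9 * P (n : ℤ) = (d₁ : ℤ) * 10 ^ (2 * ℓ + m)
      - ((d₁ : ℤ) - d₂) * 10 ^ (ℓ + m) + ((d₁ : ℤ) - d₂) * 10 ^ ℓ - d₁) :
    2 * ℓ + m < n := by
  have hP : IsKPell k P := ⟨h0, h1, hrec⟩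
  have hlow : (10 : ℤ) ^ (2 * ℓ + m - 1) ≤ P n := by
    linarith [nine_mul_ten_pow_le_palindrome (d₂ := d₂) m hd₁ hℓ]
  obtain _ | n := n
  · linarith [hP.initial ((0 : ℕ) : ℤ) (by omega) (by simp),
      pow_pos (show (0 : ℤ) < 10 by norm_num) (2 * ℓ + m - 1)]
  have hup : P (n + 1 : ℕ) ≤ 3 ^ n := by exact_mod_cast hP.le_three_pow (by omega) n
  by_contra! hle
  have hlt : (3 : ℤ) ^ (2 * ℓ + m - 1) < 10 ^ (2 * ℓ + m - 1) :=
    pow_lt_pow_left₀ (by norm_num) (by norm_num) (by omega)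
  have hmono : (3 : ℤ) ^ n ≤ 3 ^ (2 * ℓ + m - 1) := pow_le_pow_right₀ (by norm_num) (by omega)
  linarith

theorem palindromic_kPell_digit_count_lt (k : ℕ) (hk : 2 ≤ k)
    (P : ℤ → ℤ)
    (h0 : ∀ n : ℤ, 2 - (k : ℤ) ≤ n → n ≤ 0 → P n = 0) (h1 : P 1 = 1)
    (hrec : ∀ n : ℤ, 2 ≤ n →
      P n = 2 * P (n - 1) + ∑ i ∈ Finset.Icc (2 : ℤ) (k : ℤ), P (n - i))
    (n : ℕ) (hn : 7 ≤ n)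
    (d₁ d₂ ℓ m : ℕ) (hd₁ : 1 ≤ d₁) (hd₁9 : d₁ ≤ 9) (hd₂ : d₂ ≤ 9) (hne : d₁ ≠ d₂)
    (hℓ : 1 ≤ ℓ) (hm : 1 ≤ m)
    (heq : 9 * P (n : ℤ) = (d₁ : ℤ) * 10 ^ (2 * ℓ + m)
      - ((d₁ : ℤ) - d₂) * 10 ^ (ℓ + m) + ((d₁ : ℤ) - d₂) * 10 ^ ℓ - d₁) :
    2 * ℓ + m < n :=
  palindromic_kPell_digit_count_lt_general k hk P h0 h1 hrec n d₁ d₂ ℓ m hd₁ hℓ heq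
end

section
/- Let k ≥ 2 and let α be the unique real root greater than 1 of Ψ_k(x) = x^k - 2x^{k-1} - x^{k-2} - ... - x - 1. Define f_k(x) = (x-1)/((k+1)x² - 3kx + k - 1). Then 0.276 < f_k(α) < 0.5. -/
/-!
Put `u = α ^ (k - 1)`. Multiplying `Ψ_k(α) = 0` by `α - 1` collapses the geometric sum and leaves
`u * (α ^ 2 - 3 * α + 1) = -1`; hence `2 < α < φ ^ 2` and the denominator of `f_k(α)` equals
`α ^ 2 - 1 - k / u` with `0 < k / u < 1`, because `u > 2 ^ (k - 1) ≥ k`. So `f_k(α)` lies strictly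
between `1 / (α + 1) > 1 / 3.62` and `1 / 2`, the latter because `(α - 1) ^ 2 > 1`.
-/

open Finset

theorem root_poly_mul_sub_one {R : Type*} [CommRing R] (x : R) (n : ℕ) :
    (x ^ (n + 1) - 2 * x ^ n - ∑ i ∈ range n, x ^ i) * (x - 1) =
      x ^ n * (x ^ 2 - 3 * x + 1) + 1 := by
  linear_combination -geom_sum_mul x n

theorem pow_mul_eq_neg_one_of_root {R : Type*} [CommRing R] {x : R} {n : ℕ}
    (h : x ^ (n + 1) - 2 * x ^ n - ∑ i ∈ range n, x ^ i = 0) :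
    x ^ n * (x ^ 2 - 3 * x + 1) = -1 := by
  linear_combination (x - 1) * h - root_poly_mul_sub_one x n

section

variable {x : ℝ} {n : ℕ}

theorem two_lt_of_pow_mul_eq_neg_one (hx : 1 < x) (hn : n ≠ 0)
    (h : x ^ n * (x ^ 2 - 3 * x + 1) = -1) : 2 < x := by
  have hu : 1 < x ^ n := one_lt_pow₀ hx hn
  -- the identity reads `x ^ n * (x - 1) * (x - 2) = x ^ n - 1 > 0`
  nlinarith [mul_pos (by linarith : (0 : ℝ) < x ^ n) (by linarith : (0 : ℝ) < x - 1)]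

theorem lt_of_pow_mul_eq_neg_one (hx : 0 < x) (h : x ^ n * (x ^ 2 - 3 * x + 1) = -1) :
    x < 2.62 := by
  have hq : x ^ 2 - 3 * x + 1 < 0 := by nlinarith [pow_pos hx n]
  nlinarith

end

theorem natCast_lt_pow_pred {x : ℝ} (hx : 2 < x) {k : ℕ} (hk : 2 ≤ k) :
    (k : ℝ) < x ^ (k - 1) := by
  obtain ⟨m, rfl⟩ : ∃ m, k = m + 1 := ⟨k - 1, by omega⟩
  calc ((m + 1 : ℕ) : ℝ) ≤ 2 ^ m := by exact_mod_cast Nat.lt_two_pow_self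
    _ < x ^ m := pow_lt_pow_left₀ hx (by norm_num) (by omega)
    _ = x ^ (m + 1 - 1) := rfl

theorem sub_one_div_sq_sub_one_sub_bounds {a c : ℝ} (ha : 2 < a) (ha' : a < 2.62)
    (hc0 : 0 < c) (hc1 : c < 1) :
    0.276 < (a - 1) / (a ^ 2 - 1 - c) ∧ (a - 1) / (a ^ 2 - 1 - c) < 0.5 := by
  have hD : 2 * (a - 1) < a ^ 2 - 1 - c := by nlinarith
  have hDpos : 0 < a ^ 2 - 1 - c := by linarith
  constructor
  · rw [lt_div_iff₀ hDpos]
    nlinarith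
  · rw [div_lt_iff₀ hDpos]
    linarith

theorem fk_alpha_bounds (k : ℕ) (hk : 2 ≤ k)
    (α : ℝ) (hα1 : 1 < α)
    (hαroot : α ^ k - 2 * α ^ (k - 1) - ∑ i ∈ Finset.range (k - 1), α ^ i = 0) :
    0.276 < (α - 1) / (((k : ℝ) + 1) * α ^ 2 - 3 * k * α + k - 1) ∧
    (α - 1) / (((k : ℝ) + 1) * α ^ 2 - 3 * k * α + k - 1) < 0.5 := by
  have hq : α ^ (k - 1) * (α ^ 2 - 3 * α + 1) = -1 :=
    pow_mul_eq_neg_one_of_root (by rwa [Nat.sub_add_cancel (by omega : 1 ≤ k)])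
  have hα2 : 2 < α := two_lt_of_pow_mul_eq_neg_one hα1 (by omega) hq
  have hu : (k : ℝ) < α ^ (k - 1) := natCast_lt_pow_pred hα2 hk
  have hu0 : 0 < α ^ (k - 1) := by positivity
  have hden : ((k : ℝ) + 1) * α ^ 2 - 3 * k * α + k - 1 = α ^ 2 - 1 - k / α ^ (k - 1) := by
    field_simp
    linear_combination (k : ℝ) * hq
  rw [hden]
  exact sub_one_div_sq_sub_one_sub_bounds hα2 (lt_of_pow_mul_eq_neg_one (by linarith) hq)
    (by positivity) ((div_lt_one hu0).2 hu)
end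

section
/- Let k ≥ 2, let α be the dominant real root of x^k - 2x^{k-1} - ... - x - 1, and let f_k(x) = (x-1)/((k+1)x² - 3kx + k - 1). Then for all n ≥ 2 - k, |P_n^{(k)} - f_k(α)·α^n| < 1/2. -/
/-!
Put `E n = P n - f_k(α) α ^ n`. Then `E` satisfies the `k`-Pell recurrence, whose characteristic
polynomial `Ψ` has `α` as a root. The polynomial `(x - 1) Ψ(x) / (x - α)` is
`x ^ k - (3 - α) x ^ (k - 1) - ∑_{j < k - 1} α ^ (j - (k - 1)) x ^ (k - 2 - j)`, and as `2 < α < 3`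
its lower coefficients, negated, are nonnegative and sum to `1`. The defect of `E` with
respect to this second recurrence is multiplied by `α` at each step, and the constant `f_k(α)` is
exactly the one making it vanish at `n = 2`. So from `n = 2` on, `E n` is a convex combination of
the `k` preceding values, and the bound `|E n| < 1/2`, checked directly for `2 - k ≤ n ≤ 1`,
propagates.
-/

open Finset

def recDefect (m : ℕ) (a : ℕ → ℝ) (E : ℤ → ℝ) (n : ℤ) : ℝ :=
  E n - ∑ i ∈ range m, a i * E (n - 1 - i)

theorem abs_sum_mul_lt {ι : Type*} {s : Finset ι} {w x : ι → ℝ} {B : ℝ}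
    (hw : ∀ i ∈ s, 0 ≤ w i) (hw1 : ∑ i ∈ s, w i = 1) (hx : ∀ i ∈ s, |x i| < B) :
    |∑ i ∈ s, w i * x i| < B := by
  obtain ⟨i₀, hi₀, hwi₀⟩ := exists_ne_zero_of_sum_ne_zero (hw1.trans_ne one_ne_zero)
  calc |∑ i ∈ s, w i * x i| ≤ ∑ i ∈ s, w i * |x i| :=
        (abs_sum_le_sum_abs _ _).trans_eq
          (sum_congr rfl fun i hi => by rw [abs_mul, abs_of_nonneg (hw i hi)])
    _ < ∑ i ∈ s, w i * B :=
        sum_lt_sum (fun i hi => mul_le_mul_of_nonneg_left (hx i hi).le (hw i hi))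
          ⟨i₀, hi₀, mul_lt_mul_of_pos_left (hx i₀ hi₀) ((hw i₀ hi₀).lt_of_ne' hwi₀)⟩
    _ = B := by rw [← sum_mul, hw1, one_mul]

theorem abs_lt_of_recDefect_eq_zero {m : ℕ} {w : ℕ → ℝ} {E : ℤ → ℝ} {B : ℝ} {n₀ : ℤ}
    (hw : ∀ i ∈ range m, 0 ≤ w i) (hw1 : ∑ i ∈ range m, w i = 1)
    (hE : ∀ n, n₀ ≤ n → recDefect m w E n = 0)
    (hinit : ∀ n, n₀ - m ≤ n → n < n₀ → |E n| < B) (n : ℤ) (hn : n₀ - m ≤ n) : |E n| < B := by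
  have below : ∀ N, n₀ ≤ N → ∀ n, n₀ - m ≤ n → n < N → |E n| < B := by
    intro N hN
    induction N, hN using Int.leInduction with
    | base => exact hinit
    | succ N hN ih =>
      intro n hn hnN
      rcases (Int.lt_add_one_iff.mp hnN).lt_or_eq with hlt | rfl
      · exact ih n hn hlt
      · rw [sub_eq_zero.mp (hE n hN)]
        exact abs_sum_mul_lt hw hw1 fun i hi => ih _ (by simp at hi; omega) (by omega)
  exact below (max n₀ (n + 1)) (le_max_left _ _) n hn (by omega)

theorem recDefect_sub_mul (m : ℕ) (a : ℕ → ℝ) (E F : ℤ → ℝ) (c : ℝ) (n : ℤ) :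
    recDefect m a (fun n => E n - c * F n) n = recDefect m a E n - c * recDefect m a F n := by
  simp only [recDefect, mul_sub, sum_sub_distrib, mul_sum, mul_left_comm c]
  ring

theorem recDefect_succ (m : ℕ) (a : ℕ → ℝ) (E : ℤ → ℝ) (n : ℤ) :
    recDefect (m + 1) a E n = E n - a 0 * E (n - 1) - ∑ j ∈ range m, a (j + 1) * E (n - 2 - j) := by
  simp only [recDefect, sum_range_succ', Nat.cast_add, Nat.cast_one, Nat.cast_zero]
  ring_nf

def pellCoeff : ℕ → ℝ
  | 0 => 2
  | _ + 1 => 1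

-- The negated lower coefficients of `(x - 1) Ψ(x) / (x - α)`.
noncomputable def convexCoeff (m : ℕ) (α : ℝ) : ℕ → ℝ
  | 0 => 3 - α
  | j + 1 => α ^ j / α ^ m

theorem recDefect_pellCoeff (m : ℕ) (E : ℤ → ℝ) (n : ℤ) :
    recDefect (m + 1) pellCoeff E n = E n - 2 * E (n - 1) - ∑ j ∈ range m, E (n - 2 - j) := by
  simp [recDefect_succ, pellCoeff]

theorem recDefect_convexCoeff (m : ℕ) (α : ℝ) (E : ℤ → ℝ) (n : ℤ) :
    recDefect (m + 1) (convexCoeff m α) E n =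
      E n - (3 - α) * E (n - 1) - ∑ j ∈ range m, α ^ j / α ^ m * E (n - 2 - j) := by
  simp [recDefect_succ, convexCoeff]

-- The operator identity behind `(x - α) · (x - 1) Ψ(x) / (x - α) = (x - 1) · Ψ(x)`.
theorem recDefect_convexCoeff_add_one {m : ℕ} {α : ℝ} (hα : α ^ m * (3 * α - α ^ 2 - 1) = 1)
    (E : ℤ → ℝ) (n : ℤ) :
    recDefect (m + 1) (convexCoeff m α) E (n + 1) =
      α * recDefect (m + 1) (convexCoeff m α) E n +
        (recDefect (m + 1) pellCoeff E (n + 1) - recDefect (m + 1) pellCoeff E n) := by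
  have hαm : α ^ m ≠ 0 := left_ne_zero_of_mul_eq_one hα
  have hinv : (α ^ m)⁻¹ = 3 * α - α ^ 2 - 1 := inv_eq_of_mul_eq_one_right hα
  have shift : ∀ j : ℕ, n - 1 - ((j + 1 : ℕ) : ℤ) = n - 2 - j := fun j => by push_cast; ring
  have weighted := sum_range_sub (fun j => α ^ j / α ^ m * E (n - 1 - j)) m
  have plain := sum_range_sub (fun j => E (n - 1 - j)) m
  have hα_out : ∑ j ∈ range m, α ^ (j + 1) / α ^ m * E (n - 2 - j) =
      α * ∑ j ∈ range m, α ^ j / α ^ m * E (n - 2 - j) := by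
    rw [mul_sum]
    exact sum_congr rfl fun j _ => by ring
  simp only [sum_sub_distrib, hα_out, shift, div_self hαm, pow_zero, one_div, hinv, Nat.cast_zero,
    sub_zero, one_mul] at weighted plain
  rw [recDefect_convexCoeff, recDefect_convexCoeff, recDefect_pellCoeff, recDefect_pellCoeff]
  simp only [add_sub_cancel_right, show ∀ j : ℤ, n + 1 - 2 - j = n - 1 - j from fun j => by ring]
  linear_combination weighted - plain

theorem recDefect_convexCoeff_eq_zero {m : ℕ} {α : ℝ} (hα : α ^ m * (3 * α - α ^ 2 - 1) = 1)
    {E : ℤ → ℝ} {n₀ : ℤ} (hpell : ∀ n, n₀ ≤ n → recDefect (m + 1) pellCoeff E n = 0)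
    (hbase : recDefect (m + 1) (convexCoeff m α) E n₀ = 0) :
    ∀ n, n₀ ≤ n → recDefect (m + 1) (convexCoeff m α) E n = 0 := by
  intro n hn
  induction n, hn using Int.leInduction with
  | base => exact hbase
  | succ n hn ih =>
    rw [recDefect_convexCoeff_add_one hα, ih, hpell n hn, hpell (n + 1) (by omega)]
    ring

theorem sum_Icc_two_eq_sum_range {M : Type*} [AddCommMonoid M] (m : ℕ) (f : ℤ → M) :
    ∑ i ∈ Icc (2 : ℤ) (m + 1 : ℕ), f i = ∑ j ∈ range m, f (2 + j) := by
  rw [Int.Icc_eq_finset_map, sum_map, show ((m + 1 : ℕ) + 1 - 2 : ℤ).toNat = m by omega]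
  rfl

theorem recDefect_pellCoeff_zpow (m : ℕ) {α : ℝ} (hα : α ≠ 0) (n : ℤ) :
    recDefect (m + 1) pellCoeff (fun n => α ^ n) n =
      α ^ (n - (m + 1)) * (α ^ (m + 1) - 2 * α ^ m - ∑ i ∈ range m, α ^ i) := by
  have split : ∀ e : ℕ, ∀ n' : ℤ, n' = n - (m + 1) + e → α ^ n' = α ^ (n - (m + 1)) * α ^ e := by
    rintro e n' rfl
    rw [zpow_add₀ hα, zpow_natCast]
  rw [recDefect_pellCoeff, ← sum_range_reflect, mul_sub, mul_sub, mul_sum,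
    split (m + 1) n (by push_cast; ring), split m (n - 1) (by ring), mul_left_comm]
  congr 1
  refine sum_congr rfl fun j hj => split _ _ ?_
  have := mem_range.mp hj
  omega

theorem recDefect_kPell_eq_zero {m : ℕ} {P : ℤ → ℤ}
    (hrec : ∀ n : ℤ, 2 ≤ n → P n = 2 * P (n - 1) + ∑ i ∈ Icc (2 : ℤ) (m + 1 : ℕ), P (n - i))
    (n : ℤ) (hn : 2 ≤ n) : recDefect (m + 1) pellCoeff (fun n => (P n : ℝ)) n = 0 := by
  have h := hrec n hn
  rw [sum_Icc_two_eq_sum_range] at h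
  rw [recDefect_pellCoeff, h]
  push_cast [sub_add_eq_sub_sub]
  ring

-- The characteristic equation of the `(m + 1)`-Pell recurrence.
def IsKPellRoot (m : ℕ) (α : ℝ) : Prop :=
  α ^ (m + 1) - 2 * α ^ m - ∑ i ∈ range m, α ^ i = 0

namespace IsKPellRoot

variable {m : ℕ} {α : ℝ}

theorem geom_sum_eq (h : IsKPellRoot m α) : ∑ i ∈ range m, α ^ i = α ^ m * (α - 2) := by
  unfold IsKPellRoot at h
  linear_combination -h

-- `(x - 1) Ψ(x) = x ^ (m + 2) - 3 x ^ (m + 1) + x ^ m + 1`.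
theorem pow_mul_eq_one (h : IsKPellRoot m α) : α ^ m * (3 * α - α ^ 2 - 1) = 1 := by
  unfold IsKPellRoot at h
  linear_combination -(α - 1) * h - geom_sum_mul α m

theorem two_lt (h : IsKPellRoot m α) (hα : 0 < α) (hm : m ≠ 0) : 2 < α := by
  have hsum : 0 < α ^ m * (α - 2) :=
    h.geom_sum_eq ▸ sum_pos (fun i _ => pow_pos hα i) (nonempty_range_iff.mpr hm)
  linarith [pos_of_mul_pos_right hsum (pow_pos hα m).le]

theorem lt_three (h : IsKPellRoot m α) (hα : 0 < α) : α < 3 := by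
  have := pos_of_mul_pos_right (h.pow_mul_eq_one ▸ one_pos) (pow_pos hα m).le
  nlinarith

theorem recDefect_zpow (h : IsKPellRoot m α) (hα : α ≠ 0) (n : ℤ) :
    recDefect (m + 1) pellCoeff (fun n => α ^ n) n = 0 := by
  rw [recDefect_pellCoeff_zpow m hα, h, mul_zero]

theorem sum_convexCoeff (h : IsKPellRoot m α) (hα : α ≠ 0) :
    ∑ i ∈ range (m + 1), convexCoeff m α i = 1 := by
  simp only [sum_range_succ', convexCoeff, ← sum_div, h.geom_sum_eq]
  field_simp
  ring

end IsKPellRoot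

theorem convexCoeff_nonneg {m : ℕ} {α : ℝ} (hα : 0 ≤ α) (hα3 : α ≤ 3) (i : ℕ) :
    0 ≤ convexCoeff m α i := by
  cases i with
  | zero => simpa [convexCoeff] using hα3
  | succ j => simp only [convexCoeff]; positivity

-- The denominator of `f_k(α)` for `k = m + 1`.
def kPellDenom (m : ℕ) (α : ℝ) : ℝ := (m + 2) * α ^ 2 - 3 * (m + 1) * α + m

theorem recDefect_convexCoeff_zpow_two {m : ℕ} {α : ℝ} (hα : α ^ m * (3 * α - α ^ 2 - 1) = 1) :
    recDefect (m + 1) (convexCoeff m α) (fun n => α ^ n) 2 = kPellDenom m α := by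
  have hα0 : α ≠ 0 := by rintro rfl; cases m <;> norm_num at hα
  have hterm : ∀ j : ℕ, α ^ j / α ^ m * α ^ (2 - 2 - (j : ℤ)) = 3 * α - α ^ 2 - 1 := by
    intro j
    rw [← inv_eq_of_mul_eq_one_right hα, sub_self, zero_sub, zpow_neg, zpow_natCast]
    field_simp
  simp only [recDefect_convexCoeff, hterm, sum_const, card_range, nsmul_eq_mul, kPellDenom]
  norm_num
  ring

theorem kPell_two {m : ℕ} {P : ℤ → ℤ} (h0 : ∀ n : ℤ, 2 - ((m + 1 : ℕ) : ℤ) ≤ n → n ≤ 0 → P n = 0)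
    (h1 : P 1 = 1)
    (hrec : ∀ n : ℤ, 2 ≤ n → P n = 2 * P (n - 1) + ∑ i ∈ Icc (2 : ℤ) (m + 1 : ℕ), P (n - i)) :
    P 2 = 2 := by
  rw [hrec 2 le_rfl, sum_eq_zero fun i hi => h0 _ (by simp at hi; omega) (by simp at hi; omega)]
  simp [h1]

theorem recDefect_convexCoeff_kPell_two {m : ℕ} {α : ℝ} {P : ℤ → ℤ}
    (h0 : ∀ n : ℤ, 2 - ((m + 1 : ℕ) : ℤ) ≤ n → n ≤ 0 → P n = 0) (h1 : P 1 = 1)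
    (hrec : ∀ n : ℤ, 2 ≤ n → P n = 2 * P (n - 1) + ∑ i ∈ Icc (2 : ℤ) (m + 1 : ℕ), P (n - i)) :
    recDefect (m + 1) (convexCoeff m α) (fun n => (P n : ℝ)) 2 = α - 1 := by
  rw [recDefect_convexCoeff, sum_eq_zero fun j hj => by
    rw [h0 _ (by simp at hj; omega) (by omega), Int.cast_zero, mul_zero]]
  norm_num [kPell_two h0 h1 hrec, h1]
  ring

theorem kPellDenom_bounds {m : ℕ} {α : ℝ} (hα2 : 2 < α) (hα : α ^ m * (3 * α - α ^ 2 - 1) = 1) :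
    0 < kPellDenom m α ∧ 0 < (α - 1) / kPellDenom m α ∧ (α - 1) / kPellDenom m α < 1 / 2 ∧
      |1 - (α - 1) / kPellDenom m α * α| < 1 / 2 := by
  set τ := 3 * α - α ^ 2 - 1
  have hτ : 0 < τ := pos_of_mul_pos_right (hα ▸ one_pos) (by positivity)
  have hmτ : (m + 1) * τ ≤ 1 := by
    have hm : (m + 1 : ℝ) ≤ 2 ^ m := by exact_mod_cast Nat.lt_two_pow_self
    calc (m + 1) * τ ≤ α ^ m * τ := by
          gcongr
          exact hm.trans (pow_le_pow_left₀ zero_le_two hα2.le m)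
      _ = 1 := hα
  have hD : kPellDenom m α = α ^ 2 - 1 - (m + 1) * τ := by unfold kPellDenom τ; ring
  have hDpos : 0 < kPellDenom m α := by nlinarith
  refine ⟨hDpos, div_pos (by linarith) hDpos, ?_, ?_⟩
  · rw [div_lt_iff₀ hDpos]
    nlinarith
  · rw [div_mul_eq_mul_div, abs_sub_lt_iff, sub_lt_comm, lt_div_iff₀ hDpos, sub_lt_iff_lt_add',
      div_lt_iff₀ hDpos]
    constructor <;> nlinarith

theorem abs_kPell_sub_lt_of_lt_two {m : ℕ} {α g : ℝ} {P : ℤ → ℤ}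
    (h0 : ∀ n : ℤ, 2 - ((m + 1 : ℕ) : ℤ) ≤ n → n ≤ 0 → P n = 0) (h1 : P 1 = 1) (hα : 1 ≤ α)
    (hg0 : 0 < g) (hg : g < 1 / 2) (hgα : |1 - g * α| < 1 / 2) (n : ℤ)
    (hn : 2 - ((m + 1 : ℕ) : ℤ) ≤ n) (hn2 : n < 2) : |(P n : ℝ) - g * α ^ n| < 1 / 2 := by
  rcases le_or_gt n 0 with hn0 | hn0
  · rw [h0 n hn hn0, Int.cast_zero, zero_sub, abs_neg, abs_of_pos (by positivity)]
    calc g * α ^ n ≤ g * 1 := by gcongr; exact zpow_le_one_of_nonpos₀ hα hn0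
      _ < 1 / 2 := by rwa [mul_one]
  · obtain rfl : n = 1 := by omega
    simpa [h1] using hgα

theorem kPell_binet_approx (k : ℕ) (hk : 2 ≤ k)
    (α : ℝ) (hα1 : 1 < α)
    (hαroot : α ^ k - 2 * α ^ (k - 1) - ∑ i ∈ Finset.range (k - 1), α ^ i = 0)
    (P : ℤ → ℤ)
    (h0 : ∀ n : ℤ, 2 - (k : ℤ) ≤ n → n ≤ 0 → P n = 0) (h1 : P 1 = 1)
    (hrec : ∀ n : ℤ, 2 ≤ n →
      P n = 2 * P (n - 1) + ∑ i ∈ Finset.Icc (2 : ℤ) (k : ℤ), P (n - i)) :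
    ∀ n : ℤ, 2 - (k : ℤ) ≤ n →
      |(P n : ℝ) - (α - 1) / (((k : ℝ) + 1) * α ^ 2 - 3 * k * α + k - 1) * α ^ n| < 1 / 2 := by
  obtain ⟨m, rfl⟩ : ∃ m, k = m + 1 := ⟨k - 1, by omega⟩
  have hroot : IsKPellRoot m α := by simpa [IsKPellRoot] using hαroot
  have hα0 : 0 < α := by linarith
  have hτ := hroot.pow_mul_eq_one
  obtain ⟨hD, hg0, hg, hgα⟩ := kPellDenom_bounds (hroot.two_lt hα0 (by omega)) hτ
  set g := (α - 1) / kPellDenom m α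
  have hpell : ∀ n, 2 ≤ n → recDefect (m + 1) pellCoeff (fun n => P n - g * α ^ n) n = 0 := by
    intro n hn
    rw [recDefect_sub_mul, recDefect_kPell_eq_zero hrec n hn, hroot.recDefect_zpow hα0.ne',
      mul_zero, sub_zero]
  have hbase : recDefect (m + 1) (convexCoeff m α) (fun n => P n - g * α ^ n) 2 = 0 := by
    rw [recDefect_sub_mul, recDefect_convexCoeff_kPell_two h0 h1 hrec,
      recDefect_convexCoeff_zpow_two hτ, div_mul_cancel₀ _ hD.ne', sub_self]
  have hdenom : ((m + 1 : ℕ) + 1 : ℝ) * α ^ 2 - 3 * (m + 1 : ℕ) * α + (m + 1 : ℕ) - 1 =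
      kPellDenom m α := by
    unfold kPellDenom; push_cast; ring
  intro n hn
  rw [hdenom]
  exact abs_lt_of_recDefect_eq_zero (fun i _ => convexCoeff_nonneg hα0.le (hroot.lt_three hα0).le i)
    (hroot.sum_convexCoeff hα0.ne') (recDefect_convexCoeff_eq_zero hτ hpell hbase)
    (abs_kPell_sub_lt_of_lt_two h0 h1 hα1.le hg0 hg hgα) n hn
end

section
/- Let k ≥ 2 and let α₂, ..., α_k be the roots of Ψ_k(x) = x^k - 2x^{k-1} - x^{k-2} - ... - x - 1 other than the dominant root, all of which lie strictly inside the complex unit circle. Define f_k(x) = (x-1)/((k+1)x² - 3kx + k - 1). Then |f_k(α_i)| < 1 for all 2 ≤ i ≤ k. -/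
/-!
Multiplying `Ψ_k` by `x - 1` gives `x ^ (k - 1) * (x ^ 2 - 3 x + 1) + 1`, so a root `z` in the open
unit disc satisfies `‖u‖ = ‖z‖ ^ (1 - k) ≥ 1` for `u = z ^ 2 - 3 z + 1`. The denominator of `f_k` is
`k u - (1 - z ^ 2)`, of norm at least `k ‖u‖ - 1 - ‖z‖ ^ 2`, which beats `‖z - 1‖ ≤ 1 + ‖z‖` as soon as
`k ‖u‖ ≥ 4`; this settles `k ≥ 4`. For `k = 3` the small roots are `z, conj z`, and Vieta gives
`‖z‖ ^ 2 = 1 / α` with `α = 2 - 2 Re z > 2`, so `‖u‖ = ‖z‖ ^ (-2) > 2`. For `k = 2` the denominator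
is `3 Ψ_2(z) + 4 = 4`.
-/

open Complex ComplexConjugate Finset

lemma sub_one_mul_psi {R : Type*} [CommRing R] (z : R) (m : ℕ) :
    (z - 1) * (z ^ (m + 1) - 2 * z ^ m - ∑ i ∈ range m, z ^ i) =
      z ^ m * (z ^ 2 - 3 * z + 1) + 1 := by
  linear_combination -(geom_sum_mul z m)

lemma one_le_norm_of_pow_mul_eq_neg_one {𝕜 : Type*} [NormedDivisionRing 𝕜] {z u : 𝕜} {m : ℕ}
    (h : z ^ m * u = -1) (hz : ‖z‖ ≤ 1) : 1 ≤ ‖u‖ := by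
  have hnorm : ‖z‖ ^ m * ‖u‖ = 1 := by rw [← norm_pow, ← norm_mul, h, norm_neg, norm_one]
  nlinarith [pow_le_one₀ (n := m) (norm_nonneg z) hz, norm_nonneg u]

lemma norm_sub_one_lt_norm_denom_of_four_le (k : ℕ) {z : ℂ} (hz : ‖z‖ < 1)
    (hk : 4 ≤ k * ‖z ^ 2 - 3 * z + 1‖) :
    ‖z - 1‖ < ‖((k : ℂ) + 1) * z ^ 2 - 3 * k * z + k - 1‖ := by
  have hden : ((k : ℂ) + 1) * z ^ 2 - 3 * k * z + k - 1 =
      k * (z ^ 2 - 3 * z + 1) - (1 - z ^ 2) := by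
    ring
  have hsq : ‖1 - z ^ 2‖ ≤ 1 + ‖z‖ ^ 2 :=
    (norm_sub_le _ _).trans_eq (by rw [norm_one, norm_pow])
  calc ‖z - 1‖ ≤ ‖z‖ + 1 := (norm_sub_le _ _).trans_eq (by rw [norm_one])
    _ < 4 - (1 + ‖z‖ ^ 2) := by nlinarith [norm_nonneg z]
    _ ≤ ‖(k : ℂ) * (z ^ 2 - 3 * z + 1)‖ - ‖1 - z ^ 2‖ := by
        rw [norm_mul, Complex.norm_natCast]; linarith
    _ ≤ _ := hden ▸ norm_sub_norm_le _ _

/-- Vieta for two distinct roots `z, w` of `Ψ_3`: the third root is `2 - (z + w)`. -/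
lemma psi_three_vieta {K : Type*} [Field K] {z w : K} (hzw : z ≠ w)
    (hz : z ^ 3 - 2 * z ^ 2 - z - 1 = 0) (hw : w ^ 3 - 2 * w ^ 2 - w - 1 = 0) :
    z * w = (z + w) ^ 2 - 2 * (z + w) - 1 ∧ z * w * (2 - (z + w)) = 1 := by
  have hsym : z ^ 2 + z * w + w ^ 2 - 2 * (z + w) - 1 = 0 := by
    have hfac : (z - w) * (z ^ 2 + z * w + w ^ 2 - 2 * (z + w) - 1) = 0 := by
      linear_combination hz - hw
    exact (mul_eq_zero.mp hfac).resolve_left (sub_ne_zero.mpr hzw)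
  exact ⟨by linear_combination -hsym, by linear_combination hz - z * hsym⟩

lemma psi_three_ne_zero_of_abs_lt_one {x : ℝ} (hx : |x| < 1) :
    x ^ 3 - 2 * x ^ 2 - x - 1 ≠ 0 := by
  obtain ⟨hlow, hhigh⟩ := abs_lt.mp hx
  nlinarith [mul_nonneg (sq_nonneg x) (by linarith : (0 : ℝ) ≤ 2 - x)]

lemma normSq_lt_half_of_psi_three {z : ℂ} (hz : z ^ 3 - 2 * z ^ 2 - z - 1 = 0) (hz1 : ‖z‖ < 1) :
    normSq z < 1 / 2 := by
  have hnonreal : conj z ≠ z := by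
    rw [Ne, conj_eq_iff_re]
    intro hre
    rw [← hre, norm_real, Real.norm_eq_abs] at hz1
    rw [← hre] at hz
    exact psi_three_ne_zero_of_abs_lt_one hz1 (by exact_mod_cast hz)
  have hconj : conj z ^ 3 - 2 * conj z ^ 2 - conj z - 1 = 0 := by
    simpa [map_ofNat] using congrArg conj hz
  obtain ⟨hsum, hprod⟩ := psi_three_vieta hnonreal.symm hz hconj
  rw [mul_conj, add_conj] at hsum hprod
  have hsum' : normSq z = (2 * z.re) ^ 2 - 2 * (2 * z.re) - 1 := by exact_mod_cast hsum
  have hprod' : normSq z * (2 - 2 * z.re) = 1 := by exact_mod_cast hprod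
  -- `normSq z > 0` forces `2 z.re ∉ [0, 2)` by `hsum'`, and `2 z.re < 2` by `hprod'`
  nlinarith [normSq_nonneg z]

theorem fk_small_roots_bound (k : ℕ) (hk : 2 ≤ k) :
    ∀ z : ℂ, z ^ k - 2 * z ^ (k - 1) - ∑ i ∈ Finset.range (k - 1), z ^ i = 0 →
      ‖z‖ < 1 →
      ‖(z - 1) / (((k : ℂ) + 1) * z ^ 2 - 3 * k * z + k - 1)‖ < 1 := by
  intro z hz hz1
  suffices h : ‖z - 1‖ < ‖((k : ℂ) + 1) * z ^ 2 - 3 * k * z + k - 1‖ by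
    rw [norm_div]
    exact (div_lt_one ((norm_nonneg _).trans_lt h)).2 h
  obtain rfl | rfl | hk4 : k = 2 ∨ k = 3 ∨ 4 ≤ k := by omega
  · have hden : ((2 : ℕ) + 1 : ℂ) * z ^ 2 - 3 * (2 : ℕ) * z + (2 : ℕ) - 1 = 4 := by
      norm_num at hz
      push_cast
      linear_combination 3 * hz
    rw [hden, norm_ofNat]
    linarith [norm_sub_le z 1, norm_one (α := ℂ)]
  · have hpsi : z ^ 3 - 2 * z ^ 2 - z - 1 = 0 := by
      norm_num [sum_range_succ] at hz
      linear_combination hz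
    have hu : ‖z‖ ^ 2 * ‖z ^ 2 - 3 * z + 1‖ = 1 := by
      rw [← norm_pow, ← norm_mul, show z ^ 2 * (z ^ 2 - 3 * z + 1) = -1 by
        linear_combination (z - 1) * hpsi, norm_neg, norm_one]
    have hr := normSq_lt_half_of_psi_three hpsi hz1
    rw [← Complex.sq_norm] at hr
    refine norm_sub_one_lt_norm_denom_of_four_le 3 hz1 ?_
    push_cast
    nlinarith [norm_nonneg (z ^ 2 - 3 * z + 1)]
  · obtain ⟨m, rfl⟩ : ∃ m, k = m + 1 := ⟨k - 1, by omega⟩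
    rw [Nat.add_sub_cancel] at hz
    have hu : z ^ m * (z ^ 2 - 3 * z + 1) = -1 := by
      linear_combination (z - 1) * hz - sub_one_mul_psi z m
    have hu1 := one_le_norm_of_pow_mul_eq_neg_one hu hz1.le
    have hk4' : (4 : ℝ) ≤ (m + 1 : ℕ) := by exact_mod_cast hk4
    exact norm_sub_one_lt_norm_denom_of_four_le (m + 1) hz1 (by nlinarith)
end

section
/- For k ≥ 2, the polynomial Ψ_k(x) = x^k - 2x^{k-1} - x^{k-2} - ... - x - 1 is irreducible over the rationals. -/
open Finset Polynomial

/-!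
`Ψ_(n+2)` is a Pisot polynomial: it has a real root `R ∈ (2, 3)`, and `(X - 1) Ψ = (X - R) Q` with
`Q = X^(n+2) - ∑ cᵢ Xⁱ`, where `cᵢ > 0` and `∑ cᵢ = 1`. A root `z` of `Q` with `‖z‖ ≥ 1` must have
`‖z‖ = 1` and makes `1` a convex combination of the unit vectors `zⁱ / z^(n+2)`, which forces
`z = 1`. Hence `R` is a simple root of `Ψ` and all other roots lie in the open unit disk.

If `Ψ = f g` with `f, g` monic in `ℤ[X]`, one factor, say `f`, does not vanish at `R`. If `f` had
positive degree, all its roots would lie in the open unit disk, so `f(0)`, up to sign their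
product, would be an integer of absolute value `< 1`, i.e. `0`, contradicting `Ψ(0) = -1`.
Gauss's lemma transfers irreducibility from `ℤ` to `ℚ`.
-/

lemma Multiset.norm_prod_lt_one {K : Type*} [NormedField K] {s : Multiset K} (hs : s ≠ 0)
    (h : ∀ x ∈ s, ‖x‖ < 1) : ‖s.prod‖ < 1 := by
  induction s using Multiset.induction_on with
  | empty => exact absurd rfl hs
  | cons a t ih =>
    rw [Multiset.prod_cons, norm_mul]
    have ha := h a (Multiset.mem_cons_self a t)
    rcases eq_or_ne t 0 with rfl | ht
    · simpa using ha
    · exact mul_lt_one_of_nonneg_of_lt_one_left (norm_nonneg a) ha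
        (ih ht fun x hx => h x (Multiset.mem_cons_of_mem hx)).le

lemma Polynomial.Monic.norm_coeff_zero_lt_one {K : Type*} [NormedField K] [IsAlgClosed K]
    {f : K[X]} (hf : f.Monic) (hdeg : f.natDegree ≠ 0) (hroots : ∀ z ∈ f.roots, ‖z‖ < 1) :
    ‖f.coeff 0‖ < 1 := by
  have hsplit := IsAlgClosed.splits f
  rw [hsplit.coeff_zero_eq_prod_roots_of_monic hf, norm_mul, norm_pow, norm_neg, norm_one,
    one_pow, one_mul]
  refine Multiset.norm_prod_lt_one ?_ hroots
  rw [← Multiset.card_pos, ← hsplit.natDegree_eq_card_roots]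
  exact Nat.pos_of_ne_zero hdeg

section IntegerCriterion

variable {p : ℤ[X]} {r : ℂ}

lemma natDegree_eq_zero_of_dvd_of_not_isRoot (h0 : p.coeff 0 ≠ 0)
    (hroots : ∀ z, (p.map (Int.castRingHom ℂ)).IsRoot z → z ≠ r → ‖z‖ < 1)
    {f : ℤ[X]} (hf : f.Monic) (hfp : f ∣ p) (hfr : ¬ (f.map (Int.castRingHom ℂ)).IsRoot r) :
    f.natDegree = 0 := by
  by_contra hdeg
  have hFroots : ∀ z ∈ (f.map (Int.castRingHom ℂ)).roots, ‖z‖ < 1 := fun z hz => by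
    have hz := isRoot_of_mem_roots hz
    exact hroots z (hz.dvd (Polynomial.map_dvd _ hfp)) (by rintro rfl; exact hfr hz)
  have hnorm := (hf.map _).norm_coeff_zero_lt_one (by rwa [hf.natDegree_map]) hFroots
  rw [coeff_map, eq_intCast, Complex.norm_intCast] at hnorm
  have hf0 : f.coeff 0 = 0 := Int.abs_lt_one_iff.mp (by exact_mod_cast hnorm)
  obtain ⟨g, rfl⟩ := hfp
  exact h0 (by rw [mul_coeff_zero, hf0, zero_mul])

theorem irreducible_of_roots_norm_lt_one (hp : p.Monic) (h0 : p.coeff 0 ≠ 0)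
    (hr : (p.map (Int.castRingHom ℂ)).IsRoot r)
    (hsimple : ¬ (X - C r) ^ 2 ∣ p.map (Int.castRingHom ℂ))
    (hroots : ∀ z, (p.map (Int.castRingHom ℂ)).IsRoot z → z ≠ r → ‖z‖ < 1) :
    Irreducible p := by
  refine hp.irreducible_iff_natDegree.mpr ⟨?_, fun f g hf hg hfg => ?_⟩
  · rintro rfl
    simp at hr
  by_cases hfr : (f.map (Int.castRingHom ℂ)).IsRoot r
  · refine Or.inr (natDegree_eq_zero_of_dvd_of_not_isRoot h0 hroots hg (Dvd.intro_left f hfg)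
      fun hgr => hsimple ?_)
    rw [← hfg, Polynomial.map_mul, sq]
    exact mul_dvd_mul (dvd_iff_isRoot.mpr hfr) (dvd_iff_isRoot.mpr hgr)
  · exact Or.inl (natDegree_eq_zero_of_dvd_of_not_isRoot h0 hroots hf (Dvd.intro g hfg) hfr)

end IntegerCriterion

lemma eq_one_of_sum_mul_eq_one {ι : Type*} {s : Finset ι} {w : ι → ℝ} {u : ι → ℂ}
    (hw : ∀ i ∈ s, 0 < w i) (hsum : ∑ i ∈ s, w i = 1) (hu : ∀ i ∈ s, ‖u i‖ ≤ 1)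
    (h : ∑ i ∈ s, w i * u i = 1) : ∀ i ∈ s, u i = 1 := by
  have hre_le : ∀ i ∈ s, (u i).re ≤ 1 := fun i hi => (Complex.re_le_norm _).trans (hu i hi)
  have hdefect : ∑ i ∈ s, w i * (1 - (u i).re) = 0 := by
    have hre := congrArg Complex.re h
    simp only [Complex.re_sum, Complex.re_ofReal_mul, Complex.one_re] at hre
    simp only [mul_sub, mul_one, sum_sub_distrib, hsum, hre, sub_self]
  intro i hi
  have hre1 : (u i).re = 1 := by
    have := (sum_eq_zero_iff_of_nonneg fun j hj =>
      mul_nonneg (hw j hj).le (sub_nonneg.mpr (hre_le j hj))).mp hdefect i hi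
    nlinarith [hw i hi, hre_le i hi]
  have hnorm : |(u i).re| = ‖u i‖ := by
    rw [hre1, abs_one]
    exact le_antisymm (hre1 ▸ Complex.re_le_norm _) (hu i hi)
  exact Complex.ext hre1 (Complex.abs_re_eq_norm.mp hnorm)

theorem norm_lt_one_or_eq_one_of_pow_eq_sum {N : ℕ} {c : ℕ → ℝ} (hc : ∀ i < N, 0 < c i)
    (hsum : ∑ i ∈ range N, c i = 1) {z : ℂ} (hz : z ^ N = ∑ i ∈ range N, c i * z ^ i) :
    ‖z‖ < 1 ∨ z = 1 := by
  refine (lt_or_ge ‖z‖ 1).imp_right fun hz1 => ?_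
  obtain ⟨M, rfl⟩ : ∃ M, N = M + 1 :=
    Nat.exists_eq_succ_of_ne_zero (by rintro rfl; simp at hsum)
  have hnorm : ‖z‖ = 1 := by
    have hpow : ‖z‖ ^ (M + 1) ≤ ‖z‖ ^ M := calc
      ‖z‖ ^ (M + 1) = ‖∑ i ∈ range (M + 1), c i * z ^ i‖ := by rw [← norm_pow, hz]
      _ ≤ ∑ i ∈ range (M + 1), c i * ‖z‖ ^ i := by
        refine (norm_sum_le _ _).trans_eq (sum_congr rfl fun i hi => ?_)
        rw [norm_mul, norm_pow, Complex.norm_real, Real.norm_of_nonneg (hc i (mem_range.mp hi)).le]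
      _ ≤ ∑ i ∈ range (M + 1), c i * ‖z‖ ^ M := by
        refine sum_le_sum fun i hi => mul_le_mul_of_nonneg_left ?_ (hc i (mem_range.mp hi)).le
        exact pow_le_pow_right₀ hz1 (Nat.lt_succ_iff.mp (mem_range.mp hi))
      _ = ‖z‖ ^ M := by rw [← sum_mul, hsum, one_mul]
    exact le_antisymm (not_lt.mp fun h => (pow_lt_pow_right₀ h M.lt_succ_self).not_ge hpow) hz1
  have hz0 : z ≠ 0 := norm_ne_zero_iff.mp (by rw [hnorm]; exact one_ne_zero)
  have hunit := eq_one_of_sum_mul_eq_one (u := fun i => z ^ i / z ^ (M + 1))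
    (fun i hi => hc i (mem_range.mp hi)) hsum (fun i _ => by simp [norm_pow, hnorm])
    (by simp_rw [mul_div_assoc']; rw [← sum_div, ← hz, div_self (pow_ne_zero _ hz0)])
  have hM : z ^ M / (z ^ M * z) = 1 := pow_succ z M ▸ hunit M (by simp)
  rwa [div_mul_cancel_left₀ (pow_ne_zero _ hz0), inv_eq_one] at hM

/-- `psi R n` is `Ψ_(n+2)`; shifting the index avoids truncated subtraction. -/
noncomputable def psi (R : Type*) [CommRing R] (n : ℕ) : R[X] :=
  X ^ (n + 2) - 2 * X ^ (n + 1) - ∑ i ∈ range (n + 1), X ^ i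

section Psi

variable (n : ℕ)

@[simp]
lemma map_psi {R S : Type*} [CommRing R] [CommRing S] (f : R →+* S) :
    (psi R n).map f = psi S n := by
  simp [psi, Polynomial.map_sum]

lemma eval_psi {R : Type*} [CommRing R] (x : R) :
    (psi R n).eval x = x ^ (n + 2) - 2 * x ^ (n + 1) - ∑ i ∈ range (n + 1), x ^ i := by
  simp [psi, eval_finsetSum]

lemma X_sub_one_mul_psi (R : Type*) [CommRing R] :
    (X - 1) * psi R n = X ^ (n + 3) - 3 * X ^ (n + 2) + X ^ (n + 1) + 1 := by
  rw [psi]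
  linear_combination (-1 : R[X]) * geom_sum_mul (X : R[X]) (n + 1)

lemma eval_one_psi {R : Type*} [CommRing R] : (psi R n).eval 1 = -(n + 2) := by
  simp only [eval_psi, one_pow, mul_one, sum_const, card_range, nsmul_eq_mul, Nat.cast_add,
    Nat.cast_one]
  ring

lemma psi_monic : (psi ℤ n).Monic :=
  monic_X_sub_C 1 |>.of_mul_monic_left (by rw [C_1, X_sub_one_mul_psi]; monicity!)

lemma coeff_zero_psi : (psi ℤ n).coeff 0 = -1 := by
  simp [psi, coeff_X_pow]

lemma exists_isRoot_psi : ∃ R : ℝ, 2 < R ∧ R < 3 ∧ (psi ℝ n).IsRoot R := by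
  have h2 : (psi ℝ n).eval 2 < 0 := by
    have hgeom := geom_sum_mul (2 : ℝ) (n + 1)
    have : (2 : ℝ) ≤ 2 ^ (n + 1) := le_self_pow₀ one_le_two n.succ_ne_zero
    rw [eval_psi, pow_succ _ (n + 1)]
    linarith
  have h3 : 0 < (psi ℝ n).eval 3 := by
    have hgeom := geom_sum_mul (3 : ℝ) (n + 1)
    have : (0 : ℝ) < 3 ^ (n + 1) := by positivity
    rw [eval_psi, pow_succ _ (n + 1)]
    linarith
  obtain ⟨R, ⟨hR2, hR3⟩, hR⟩ := intermediate_value_Ioo (by norm_num : (2 : ℝ) ≤ 3)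
    (psi ℝ n).continuous.continuousOn ⟨h2, h3⟩
  exact ⟨R, hR2, hR3, hR⟩

end Psi

section Cofactor

variable {K : Type*} [Field K] {n : ℕ} {ρ : K}

/-- Synthetic division of `(X - 1) * psi K n` by `X - ρ` at a root `ρ` gives these coefficients. -/
noncomputable def psiCofactorCoeff (ρ : K) (n i : ℕ) : K :=
  if i = n + 1 then 3 - ρ else ρ⁻¹ ^ (i + 1)

noncomputable def psiCofactor (ρ : K) (n : ℕ) : K[X] :=
  X ^ (n + 2) - ∑ i ∈ range (n + 2), C (psiCofactorCoeff ρ n i) * X ^ i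

lemma X_sub_one_mul_psi_eq_mul_psiCofactor (hρ : (psi K n).IsRoot ρ) :
    (X - 1) * psi K n = (X - C ρ) * psiCofactor ρ n := by
  have hρ0 : ρ ≠ 0 := by
    rintro rfl
    simp [IsRoot, eval_psi] at hρ
  set s := ρ⁻¹
  have hs : ρ * s = 1 := mul_inv_cancel₀ hρ0
  have hkey : s ^ (n + 1) = 3 * ρ - ρ ^ 2 - 1 := by
    have h := congrArg (eval ρ) (X_sub_one_mul_psi n K)
    simp only [eval_mul, hρ.eq_zero, mul_zero, eval_add, eval_sub, eval_pow, eval_X, eval_one,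
      eval_ofNat] at h
    have hsn : ρ ^ (n + 1) * s ^ (n + 1) = 1 := by rw [← mul_pow, hs, one_pow]
    linear_combination -s ^ (n + 1) * h - (ρ ^ 2 - 3 * ρ + 1) * hsn
  have hgeom : (X - C ρ) * ∑ i ∈ range (n + 1), C (s ^ (i + 1)) * X ^ i
      = C s ^ (n + 1) * X ^ (n + 1) - 1 := by
    have h := geom_sum_mul (C s * X) (n + 1)
    have hCs : C ρ * C s = 1 := by rw [← C_mul, hs, C_1]
    have hsum : ∑ i ∈ range (n + 1), C (s ^ (i + 1)) * X ^ i
        = C s * ∑ i ∈ range (n + 1), (C s * X) ^ i := by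
      rw [mul_sum]
      refine sum_congr rfl fun i _ => ?_
      rw [map_pow, mul_pow, pow_succ]
      ring
    rw [hsum]
    linear_combination h - (∑ i ∈ range (n + 1), (C s * X) ^ i) * hCs
  have hkeyC : C s ^ (n + 1) = 3 * C ρ - C ρ ^ 2 - 1 := by
    simpa only [map_pow, map_sub, map_mul, map_ofNat, map_one] using congrArg C hkey
  have htop : C (psiCofactorCoeff ρ n (n + 1)) = 3 - C ρ := by
    rw [psiCofactorCoeff, if_pos rfl, C_sub, map_ofNat]
  have hlow : ∀ i ∈ range (n + 1),
      C (psiCofactorCoeff ρ n i) * X ^ i = C (s ^ (i + 1)) * X ^ i := by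
    intro i hi
    rw [psiCofactorCoeff, if_neg (by simp at hi; omega)]
  rw [X_sub_one_mul_psi, psiCofactor, sum_range_succ, htop, sum_congr rfl hlow]
  linear_combination hgeom + X ^ (n + 1) * hkeyC

end Cofactor

section RealRoot

variable {n : ℕ} {R : ℝ}

lemma psiCofactorCoeff_pos (hR1 : 1 < R) (hR3 : R < 3) (i : ℕ) : 0 < psiCofactorCoeff R n i := by
  unfold psiCofactorCoeff
  split_ifs
  · linarith
  · exact pow_pos (inv_pos.mpr (by linarith)) _

lemma eval_map_psiCofactor (z : ℂ) :
    ((psiCofactor R n).map Complex.ofRealHom).eval z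
      = z ^ (n + 2) - ∑ i ∈ range (n + 2), ((psiCofactorCoeff R n i : ℝ) : ℂ) * z ^ i := by
  simp [psiCofactor, Polynomial.map_sum, eval_finsetSum]

lemma sum_psiCofactorCoeff (hroot : (psi ℝ n).IsRoot R) (hR1 : 1 < R) :
    ∑ i ∈ range (n + 2), psiCofactorCoeff R n i = 1 := by
  have h := congrArg (eval 1) (X_sub_one_mul_psi_eq_mul_psiCofactor hroot)
  simp only [eval_mul, eval_sub, eval_X, eval_one, sub_self, zero_mul, psiCofactor, eval_C,
    eval_pow, one_pow, eval_finsetSum, mul_one, zero_eq_mul] at h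
  linarith [h.resolve_left (by linarith)]

lemma X_sub_one_mul_psi_eq_mul_map_psiCofactor (hroot : (psi ℝ n).IsRoot R) :
    (X - 1) * psi ℂ n = (X - C (R : ℂ)) * (psiCofactor R n).map Complex.ofRealHom := by
  simpa [Polynomial.map_mul] using
    congrArg (map Complex.ofRealHom) (X_sub_one_mul_psi_eq_mul_psiCofactor hroot)

lemma norm_lt_one_or_eq_one_of_isRoot_psiCofactor (hroot : (psi ℝ n).IsRoot R) (hR1 : 1 < R)
    (hR3 : R < 3) {z : ℂ} (hz : ((psiCofactor R n).map Complex.ofRealHom).IsRoot z) :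
    ‖z‖ < 1 ∨ z = 1 := by
  rw [IsRoot, eval_map_psiCofactor, sub_eq_zero] at hz
  exact norm_lt_one_or_eq_one_of_pow_eq_sum (fun i _ => psiCofactorCoeff_pos hR1 hR3 i)
    (sum_psiCofactorCoeff hroot hR1) hz

lemma norm_lt_one_of_isRoot_psi (hroot : (psi ℝ n).IsRoot R) (hR1 : 1 < R) (hR3 : R < 3)
    {z : ℂ} (hz : (psi ℂ n).IsRoot z) (hzR : z ≠ R) : ‖z‖ < 1 := by
  have hQ : ((psiCofactor R n).map Complex.ofRealHom).IsRoot z := by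
    have h := congrArg (eval z) (X_sub_one_mul_psi_eq_mul_map_psiCofactor hroot)
    rw [eval_mul, eval_mul, hz.eq_zero, mul_zero, eq_comm, mul_eq_zero, eval_sub, eval_X,
      eval_C] at h
    exact h.resolve_left (sub_ne_zero.mpr hzR)
  refine (norm_lt_one_or_eq_one_of_isRoot_psiCofactor hroot hR1 hR3 hQ).resolve_right ?_
  rintro rfl
  rw [IsRoot, eval_one_psi] at hz
  exact absurd hz (by norm_cast)

lemma not_sq_dvd_psi (hroot : (psi ℝ n).IsRoot R) (hR1 : 1 < R) (hR3 : R < 3) :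
    ¬ (X - C (R : ℂ)) ^ 2 ∣ psi ℂ n := by
  intro hdvd
  have hQ : X - C (R : ℂ) ∣ (psiCofactor R n).map Complex.ofRealHom := by
    have h := hdvd.mul_left (X - 1)
    rw [X_sub_one_mul_psi_eq_mul_map_psiCofactor hroot, sq] at h
    exact (mul_dvd_mul_iff_left (X_sub_C_ne_zero _)).mp h
  rcases norm_lt_one_or_eq_one_of_isRoot_psiCofactor hroot hR1 hR3 (dvd_iff_isRoot.mp hQ)
    with h | h
  · rw [Complex.norm_real, Real.norm_of_nonneg (by linarith)] at h
    linarith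
  · exact hR1.ne' (by exact_mod_cast h)

end RealRoot

theorem psi_k_irreducible (k : ℕ) (hk : 2 ≤ k) :
    Irreducible ((Polynomial.X : Polynomial ℚ) ^ k - 2 * Polynomial.X ^ (k - 1)
      - ∑ i ∈ Finset.range (k - 1), Polynomial.X ^ i) := by
  obtain ⟨n, rfl⟩ : ∃ n, k = n + 2 := ⟨k - 2, by omega⟩
  obtain ⟨R, hR2, hR3, hroot⟩ := exists_isRoot_psi n
  have hR1 : 1 < R := one_lt_two.trans hR2
  have hirr : Irreducible (psi ℤ n) := by
    refine irreducible_of_roots_norm_lt_one (r := R) (psi_monic n) (by simp [coeff_zero_psi])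
      ?_ ?_ ?_ <;> rw [map_psi]
    · simpa using hroot.map (f := Complex.ofRealHom)
    · exact not_sq_dvd_psi hroot hR1 hR3
    · exact fun z hz hzR => norm_lt_one_of_isRoot_psi hroot hR1 hR3 hz hzR
  have hirrQ :=
    (IsPrimitive.Int.irreducible_iff_irreducible_map_cast (psi_monic n).isPrimitive).mp hirr
  rw [map_psi] at hirrQ
  exact hirrQ
end
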